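/- Under assumptions (A1)–(A4) with μ > 2, for every (f1,f2), (g1,g2) ∈ 𝒦 and every η ≥ r0 one has (E2inf/(L2M·(μ+ν−1)))·(r0^(−(μ+ν−1)) − η^(−(μ+ν−1))) ≤ Φ2(η; f1,f2) ≤ 1/(L2m·(μ+ν−1)·r0^(μ+ν−1)), and |Φ2(η; f1,f2) − Φ2(η; g1,g2)| ≤ Φ̃2·‖(f1,f2) − (g1,g2)‖, where Φ̃2 = Ẽ2/(L2m·(μ+ν−1)·r0^(μ+ν−1)) + L̃2/(L2m²·(2μ+ν−1)·r0^(2μ+ν−1)), E2inf = exp(−[a·N2M/(L2m·(μ−1)·r0^(2μ−2)) + D2·K2M/(H_inf·L2m·(2μ+ν−1)·r0^(2μ+ν−1))]), Ẽ2 = 2a·[Ñ2/(L2m·(μ−2)·r0^(μ−2)) + N2M·L̃2/(L2m²·(3μ−2)·r0^(3μ−2))] + D2·[K̃2/(H_inf·L2m·(2μ+ν−1)·r0^(2μ+ν−1)) + (K2M/(H_inf·L2m))·(H̃/(H_inf·(2μ+ν−1)·r0^(2μ+ν−1)) + L̃2/(L2m·(3μ+ν−1)·r0^(3μ+ν−1)))],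 H_inf = (K1m/(μ+ν−1))·(s0^(−(μ+ν−1)) − r0^(−(μ+ν−1))), and H̃ = (K̃1·s0^(−(μ+ν−1)) + K̃2·r0^(−(μ+ν−1)))/(μ+ν−1). -/

import Mathlib

open MeasureTheory Filter Topology

noncomputable section

/-- The bundle of fixed constants of the problem. -/
structure Cst where
  nu : ℝ
  mu : ℝ
  a : ℝ
  D1 : ℝ
  D2 : ℝ
  Q : ℝ
  D1s : ℝ
  D2s : ℝ
  L1m : ℝ
  L1M : ℝ
  N1m : ℝ
  N1M : ℝ
  K1m : ℝ
  K1M : ℝ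
  L2m : ℝ
  L2M : ℝ
  N2m : ℝ
  N2M : ℝ
  K2m : ℝ
  K2M : ℝ
  Lt1 : ℝ
  Nt1 : ℝ
  Kt1 : ℝ
  Lt2 : ℝ
  Nt2 : ℝ
  Kt2 : ℝ

/-- The space `C[s0,r0]`, modeled as real functions continuous on `[s0,r0]`. -/
def C1 (s0 r0 : ℝ) : Set (ℝ → ℝ) := {f | ContinuousOn f (Set.Icc s0 r0)}

/-- The set `ℳ ⊆ C_b[r0,∞)`: bounded continuous functions on `[r0,∞)` with
`f(r0) = 0` and `f(η) → -1` as `η → ∞`. -/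
def Mset (r0 : ℝ) : Set (ℝ → ℝ) :=
  {f | ContinuousOn f (Set.Ici r0) ∧ (∃ C, ∀ x ∈ Set.Ici r0, |f x| ≤ C) ∧
    f r0 = 0 ∧ Tendsto f atTop (𝓝 (-1))}

/-- Sup norm of `f` over the set `S`. -/
def supOn (S : Set ℝ) (f : ℝ → ℝ) : ℝ := ⨆ x : S, |f x.1|

/-- Norm of the difference of two pairs in `𝒦 = C[s0,r0] × ℳ`. -/
def pairNorm (s0 r0 : ℝ) (f1 f2 g1 g2 : ℝ → ℝ) : ℝ :=
  max (supOn (Set.Icc s0 r0) (f1 - g1)) (supOn (Set.Ici r0) (f2 - g2))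

/-- Positivity assumptions on all the fixed constants and on `s0, r0`. -/
def PosC (c : Cst) (s0 r0 : ℝ) : Prop :=
  0 < c.a ∧ 0 < c.nu ∧ c.nu < 1 ∧ 2 < c.mu ∧ 0 < s0 ∧ s0 < r0 ∧
  0 < c.D1 ∧ 0 < c.D2 ∧ 0 < c.Q ∧ 0 < c.D1s ∧ 0 < c.D2s ∧
  0 < c.L1m ∧ 0 < c.L1M ∧ 0 < c.N1m ∧ 0 < c.N1M ∧ 0 < c.K1m ∧ 0 < c.K1M ∧
  0 < c.L2m ∧ 0 < c.L2M ∧ 0 < c.N2m ∧ 0 < c.N2M ∧ 0 < c.K2m ∧ 0 < c.K2M ∧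
  0 < c.Lt1 ∧ 0 < c.Nt1 ∧ 0 < c.Kt1 ∧ 0 < c.Lt2 ∧ 0 < c.Nt2 ∧ 0 < c.Kt2

/-- Positivity assumptions on all the fixed constants (no `s0, r0`). -/
def PosCst (c : Cst) : Prop :=
  0 < c.a ∧ 0 < c.nu ∧ c.nu < 1 ∧ 2 < c.mu ∧
  0 < c.D1 ∧ 0 < c.D2 ∧ 0 < c.Q ∧ 0 < c.D1s ∧ 0 < c.D2s ∧
  0 < c.L1m ∧ 0 < c.L1M ∧ 0 < c.N1m ∧ 0 < c.N1M ∧ 0 < c.K1m ∧ 0 < c.K1M ∧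
  0 < c.L2m ∧ 0 < c.L2M ∧ 0 < c.N2m ∧ 0 < c.N2M ∧ 0 < c.K2m ∧ 0 < c.K2M ∧
  0 < c.Lt1 ∧ 0 < c.Nt1 ∧ 0 < c.Kt1 ∧ 0 < c.Lt2 ∧ 0 < c.Nt2 ∧ 0 < c.Kt2

/-- Assumptions (A1)–(A4): continuity of the images of `L, N, K`, the two-sided
bounds and the Lipschitz bounds. -/
def Assum (c : Cst) (s0 r0 : ℝ) (L1 N1 K1 L2 N2 K2 : (ℝ → ℝ) → ℝ → ℝ) : Prop :=
  (∀ f1 ∈ C1 s0 r0,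
    ContinuousOn (L1 f1) (Set.Icc s0 r0) ∧ ContinuousOn (N1 f1) (Set.Icc s0 r0) ∧
      ContinuousOn (K1 f1) (Set.Icc s0 r0)) ∧
  (∀ f2 ∈ Mset r0,
    ContinuousOn (L2 f2) (Set.Ici r0) ∧ ContinuousOn (N2 f2) (Set.Ici r0) ∧
      ContinuousOn (K2 f2) (Set.Ici r0)) ∧
  (∀ f1 ∈ C1 s0 r0, ∀ η ∈ Set.Icc s0 r0,
    c.L1m * η ^ c.mu ≤ L1 f1 η ∧ L1 f1 η ≤ c.L1M * η ^ c.mu ∧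
    c.N1m * η ^ (-c.mu) ≤ N1 f1 η ∧ N1 f1 η ≤ c.N1M * η ^ (-c.mu) ∧
    c.K1m * η ^ (-c.mu) ≤ K1 f1 η ∧ K1 f1 η ≤ c.K1M * η ^ (-c.mu)) ∧
  (∀ f2 ∈ Mset r0, ∀ η ∈ Set.Ici r0,
    c.L2m * η ^ c.mu ≤ L2 f2 η ∧ L2 f2 η ≤ c.L2M * η ^ c.mu ∧
    c.N2m * η ^ (-c.mu) ≤ N2 f2 η ∧ N2 f2 η ≤ c.N2M * η ^ (-c.mu) ∧
    c.K2m * η ^ (-c.mu) ≤ K2 f2 η ∧ K2 f2 η ≤ c.K2M * η ^ (-c.mu)) ∧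
  (∀ f1 ∈ C1 s0 r0, ∀ g1 ∈ C1 s0 r0, ∀ η ∈ Set.Icc s0 r0,
    |L1 f1 η - L1 g1 η| ≤ c.Lt1 * supOn (Set.Icc s0 r0) (f1 - g1) ∧
    |N1 f1 η - N1 g1 η| ≤ c.Nt1 * supOn (Set.Icc s0 r0) (f1 - g1) ∧
    |K1 f1 η - K1 g1 η| ≤ c.Kt1 * η ^ (-c.mu) * supOn (Set.Icc s0 r0) (f1 - g1)) ∧
  (∀ f2 ∈ Mset r0, ∀ g2 ∈ Mset r0, ∀ η ∈ Set.Ici r0,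
    |L2 f2 η - L2 g2 η| ≤ c.Lt2 * supOn (Set.Ici r0) (f2 - g2) ∧
    |N2 f2 η - N2 g2 η| ≤ c.Nt2 * supOn (Set.Ici r0) (f2 - g2) ∧
    |K2 f2 η - K2 g2 η| ≤ c.Kt2 * η ^ (-c.mu) * supOn (Set.Ici r0) (f2 - g2))

/-- `H(f1,f2) = ∫_{s0}^{r0} K(f1)(v)/v^ν dv + ∫_{r0}^{∞} K(f2)(v)/v^ν dv`. -/
def Hf (c : Cst) (s0 r0 : ℝ) (L1 N1 K1 L2 N2 K2 : (ℝ → ℝ) → ℝ → ℝ) (f1 f2 : ℝ → ℝ) : ℝ :=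
  (∫ v in s0..r0, K1 f1 v / v ^ c.nu) + ∫ v in Set.Ioi r0, K2 f2 v / v ^ c.nu

/-- `E1(η; f1,f2)`. -/
def E1f (c : Cst) (s0 r0 : ℝ) (L1 N1 K1 L2 N2 K2 : (ℝ → ℝ) → ℝ → ℝ) (f1 f2 : ℝ → ℝ)
    (η : ℝ) : ℝ :=
  Real.exp (-(∫ v in s0..η,
    (2 * c.a * v * (N1 f1 v / L1 f1 v)
      + c.D1 / Hf c s0 r0 L1 N1 K1 L2 N2 K2 f1 f2 * (K1 f1 v / (L1 f1 v * v ^ c.nu)))))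

/-- `Φ1(η; f1,f2)`. -/
def Phi1f (c : Cst) (s0 r0 : ℝ) (L1 N1 K1 L2 N2 K2 : (ℝ → ℝ) → ℝ → ℝ) (f1 f2 : ℝ → ℝ)
    (η : ℝ) : ℝ :=
  ∫ v in s0..η, E1f c s0 r0 L1 N1 K1 L2 N2 K2 f1 f2 v / (L1 f1 v * v ^ c.nu)

/-- `H1(η; f1,f2)`. -/
def H1f (c : Cst) (s0 r0 : ℝ) (L1 N1 K1 L2 N2 K2 : (ℝ → ℝ) → ℝ → ℝ) (f1 f2 : ℝ → ℝ)
    (η : ℝ) : ℝ :=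
  ∫ v in s0..η, K1 f1 v / (v ^ c.nu * E1f c s0 r0 L1 N1 K1 L2 N2 K2 f1 f2 v)

/-- `G1(η; f1,f2)`. -/
def G1f (c : Cst) (s0 r0 : ℝ) (L1 N1 K1 L2 N2 K2 : (ℝ → ℝ) → ℝ → ℝ) (f1 f2 : ℝ → ℝ)
    (η : ℝ) : ℝ :=
  ∫ v in s0..η, E1f c s0 r0 L1 N1 K1 L2 N2 K2 f1 f2 v
    * H1f c s0 r0 L1 N1 K1 L2 N2 K2 f1 f2 v / (L1 f1 v * v ^ c.nu)

/-- `V1(f1,f2)(η)`. -/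
def V1f (c : Cst) (s0 r0 : ℝ) (L1 N1 K1 L2 N2 K2 : (ℝ → ℝ) → ℝ → ℝ) (f1 f2 : ℝ → ℝ)
    (η : ℝ) : ℝ :=
  s0 ^ c.nu * c.Q * Real.exp (-s0 ^ 2)
      * (Phi1f c s0 r0 L1 N1 K1 L2 N2 K2 f1 f2 r0 - Phi1f c s0 r0 L1 N1 K1 L2 N2 K2 f1 f2 η)
    + c.D1s / Hf c s0 r0 L1 N1 K1 L2 N2 K2 f1 f2 ^ 2
      * (G1f c s0 r0 L1 N1 K1 L2 N2 K2 f1 f2 r0 - G1f c s0 r0 L1 N1 K1 L2 N2 K2 f1 f2 η)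

/-- `E2(η; f1,f2)`. -/
def E2f (c : Cst) (s0 r0 : ℝ) (L1 N1 K1 L2 N2 K2 : (ℝ → ℝ) → ℝ → ℝ) (f1 f2 : ℝ → ℝ)
    (η : ℝ) : ℝ :=
  Real.exp (-(∫ v in r0..η,
    (2 * c.a * v * (N2 f2 v / L2 f2 v)
      + c.D2 / Hf c s0 r0 L1 N1 K1 L2 N2 K2 f1 f2 * (K2 f2 v / (L2 f2 v * v ^ c.nu)))))

/-- `Φ2(η; f1,f2)`. -/
def Phi2f (c : Cst) (s0 r0 : ℝ) (L1 N1 K1 L2 N2 K2 : (ℝ → ℝ) → ℝ → ℝ) (f1 f2 : ℝ → ℝ)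
    (η : ℝ) : ℝ :=
  ∫ v in r0..η, E2f c s0 r0 L1 N1 K1 L2 N2 K2 f1 f2 v / (L2 f2 v * v ^ c.nu)

/-- `Φ2(∞; f1,f2)`. -/
def Phi2I (c : Cst) (s0 r0 : ℝ) (L1 N1 K1 L2 N2 K2 : (ℝ → ℝ) → ℝ → ℝ) (f1 f2 : ℝ → ℝ) : ℝ :=
  ∫ v in Set.Ioi r0, E2f c s0 r0 L1 N1 K1 L2 N2 K2 f1 f2 v / (L2 f2 v * v ^ c.nu)

/-- `H2(η; f1,f2)`. -/
def H2f (c : Cst) (s0 r0 : ℝ) (L1 N1 K1 L2 N2 K2 : (ℝ → ℝ) → ℝ → ℝ) (f1 f2 : ℝ → ℝ)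
    (η : ℝ) : ℝ :=
  ∫ v in r0..η, K2 f2 v / (v ^ c.nu * E2f c s0 r0 L1 N1 K1 L2 N2 K2 f1 f2 v)

/-- `G2(η; f1,f2)`. -/
def G2f (c : Cst) (s0 r0 : ℝ) (L1 N1 K1 L2 N2 K2 : (ℝ → ℝ) → ℝ → ℝ) (f1 f2 : ℝ → ℝ)
    (η : ℝ) : ℝ :=
  ∫ v in r0..η, E2f c s0 r0 L1 N1 K1 L2 N2 K2 f1 f2 v
    * H2f c s0 r0 L1 N1 K1 L2 N2 K2 f1 f2 v / (L2 f2 v * v ^ c.nu)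

/-- `G2(∞; f1,f2) = lim_{η→∞} G2(η; f1,f2)`. -/
def G2I (c : Cst) (s0 r0 : ℝ) (L1 N1 K1 L2 N2 K2 : (ℝ → ℝ) → ℝ → ℝ) (f1 f2 : ℝ → ℝ) : ℝ :=
  limUnder atTop (G2f c s0 r0 L1 N1 K1 L2 N2 K2 f1 f2)

/-- `V2(f1,f2)(η)`. -/
def V2f (c : Cst) (s0 r0 : ℝ) (L1 N1 K1 L2 N2 K2 : (ℝ → ℝ) → ℝ → ℝ) (f1 f2 : ℝ → ℝ)
    (η : ℝ) : ℝ :=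
  (c.D2s / Hf c s0 r0 L1 N1 K1 L2 N2 K2 f1 f2 ^ 2 * G2I c s0 r0 L1 N1 K1 L2 N2 K2 f1 f2 - 1)
      * (Phi2f c s0 r0 L1 N1 K1 L2 N2 K2 f1 f2 η / Phi2I c s0 r0 L1 N1 K1 L2 N2 K2 f1 f2)
    - c.D2s / Hf c s0 r0 L1 N1 K1 L2 N2 K2 f1 f2 ^ 2 * G2f c s0 r0 L1 N1 K1 L2 N2 K2 f1 f2 η

/-! Constants appearing in the estimates. -/

def Hinf (c : Cst) (s0 r0 : ℝ) : ℝ :=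
  c.K1m / (c.mu + c.nu - 1) * (s0 ^ (-(c.mu + c.nu - 1)) - r0 ^ (-(c.mu + c.nu - 1)))

def Hsup (c : Cst) (s0 r0 : ℝ) : ℝ :=
  (c.K1M * s0 ^ (-(c.mu + c.nu - 1)) + c.K2M * r0 ^ (-(c.mu + c.nu - 1))) / (c.mu + c.nu - 1)

def Htil (c : Cst) (s0 r0 : ℝ) : ℝ :=
  (c.Kt1 * s0 ^ (-(c.mu + c.nu - 1)) + c.Kt2 * r0 ^ (-(c.mu + c.nu - 1))) / (c.mu + c.nu - 1)

/-- Limit of `Hinf` as `r0 → ∞`. -/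
def HinfI (c : Cst) (s0 : ℝ) : ℝ := c.K1m / (c.mu + c.nu - 1) * s0 ^ (-(c.mu + c.nu - 1))

/-- Limit of `Hsup` as `r0 → ∞`. -/
def HsupI (c : Cst) (s0 : ℝ) : ℝ := c.K1M * s0 ^ (-(c.mu + c.nu - 1)) / (c.mu + c.nu - 1)

/-- Limit of `Htil` as `r0 → ∞`. -/
def HtilI (c : Cst) (s0 : ℝ) : ℝ := c.Kt1 * s0 ^ (-(c.mu + c.nu - 1)) / (c.mu + c.nu - 1)

/-- `E1inf` as a function of the value `h` of `Hinf`. -/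
def E1infG (c : Cst) (s0 h : ℝ) : ℝ :=
  Real.exp (-(c.a * c.N1M / (c.L1m * (c.mu - 1) * s0 ^ (2 * c.mu - 2))
    + c.D1 * c.K1M / (h * c.L1m * (2 * c.mu + c.nu - 1) * s0 ^ (2 * c.mu + c.nu - 1))))

/-- `Ẽ1` as a function of the values `h` of `Hinf` and `ht` of `Htil`. -/
def E1tilG (c : Cst) (s0 h ht : ℝ) : ℝ :=
  2 * c.a * (c.Nt1 / (c.L1m * (c.mu - 2) * s0 ^ (c.mu - 2))
      + c.N1M * c.Lt1 / (c.L1m ^ 2 * (3 * c.mu - 2) * s0 ^ (3 * c.mu - 2)))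
    + c.D1 * (c.Kt1 / (h * c.L1m * (2 * c.mu + c.nu - 1) * s0 ^ (2 * c.mu + c.nu - 1))
      + c.K1M / (h * c.L1m)
        * (ht / (h * (2 * c.mu + c.nu - 1) * s0 ^ (2 * c.mu + c.nu - 1))
          + c.Lt1 / (c.L1m * (3 * c.mu + c.nu - 1) * s0 ^ (3 * c.mu + c.nu - 1))))

def Phi1tilG (c : Cst) (s0 h ht : ℝ) : ℝ :=
  E1tilG c s0 h ht / (c.L1m * (c.mu + c.nu - 1) * s0 ^ (c.mu + c.nu - 1))
    + c.Lt1 / (c.L1m ^ 2 * (2 * c.mu + c.nu - 1) * s0 ^ (2 * c.mu + c.nu - 1))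

def H1supG (c : Cst) (s0 h : ℝ) : ℝ :=
  c.K1M / (E1infG c s0 h * (c.mu + c.nu - 1) * s0 ^ (c.mu + c.nu - 1))

def H1tilG (c : Cst) (s0 h ht : ℝ) : ℝ :=
  (c.Kt1 + c.K1M * E1tilG c s0 h ht / E1infG c s0 h)
    / (E1infG c s0 h * (c.mu + c.nu - 1) * s0 ^ (c.mu + c.nu - 1))

def G1supG (c : Cst) (s0 h : ℝ) : ℝ :=
  H1supG c s0 h / (c.L1m * (c.mu + c.nu - 1) * s0 ^ (c.mu + c.nu - 1))

def G1tilG (c : Cst) (s0 h ht : ℝ) : ℝ :=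
  H1supG c s0 h * Phi1tilG c s0 h ht
    + H1tilG c s0 h ht / (c.L1m * (c.mu + c.nu - 1) * s0 ^ (c.mu + c.nu - 1))

/-- `ε1` as a function of the values `h` of `Hinf`, `hs` of `Hsup`, `ht` of `Htil`. -/
def eps1G (c : Cst) (s0 h hs ht : ℝ) : ℝ :=
  2 * s0 ^ c.nu * c.Q * Real.exp (-s0 ^ 2) * Phi1tilG c s0 h ht
    + 2 * c.D1s * (2 * G1supG c s0 h * hs * ht / h ^ 4 + G1tilG c s0 h ht / h ^ 2)

def E1inf (c : Cst) (s0 r0 : ℝ) : ℝ := E1infG c s0 (Hinf c s0 r0)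
def E1til (c : Cst) (s0 r0 : ℝ) : ℝ := E1tilG c s0 (Hinf c s0 r0) (Htil c s0 r0)
def Phi1til (c : Cst) (s0 r0 : ℝ) : ℝ := Phi1tilG c s0 (Hinf c s0 r0) (Htil c s0 r0)
def H1sup (c : Cst) (s0 r0 : ℝ) : ℝ := H1supG c s0 (Hinf c s0 r0)
def H1til (c : Cst) (s0 r0 : ℝ) : ℝ := H1tilG c s0 (Hinf c s0 r0) (Htil c s0 r0)
def G1sup (c : Cst) (s0 r0 : ℝ) : ℝ := G1supG c s0 (Hinf c s0 r0)
def G1til (c : Cst) (s0 r0 : ℝ) : ℝ := G1tilG c s0 (Hinf c s0 r0) (Htil c s0 r0)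
def eps1 (c : Cst) (s0 r0 : ℝ) : ℝ := eps1G c s0 (Hinf c s0 r0) (Hsup c s0 r0) (Htil c s0 r0)

/-- `j1(s0) = lim_{r0→∞} ε1(r0,s0)`: the same expression with `Hinf, Hsup, Htil`
replaced by their limits as `r0 → ∞`. -/
def j1 (c : Cst) (s0 : ℝ) : ℝ := eps1G c s0 (HinfI c s0) (HsupI c s0) (HtilI c s0)

def E2inf (c : Cst) (s0 r0 : ℝ) : ℝ :=
  Real.exp (-(c.a * c.N2M / (c.L2m * (c.mu - 1) * r0 ^ (2 * c.mu - 2))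
    + c.D2 * c.K2M / (Hinf c s0 r0 * c.L2m * (2 * c.mu + c.nu - 1) * r0 ^ (2 * c.mu + c.nu - 1))))

def E2til (c : Cst) (s0 r0 : ℝ) : ℝ :=
  2 * c.a * (c.Nt2 / (c.L2m * (c.mu - 2) * r0 ^ (c.mu - 2))
      + c.N2M * c.Lt2 / (c.L2m ^ 2 * (3 * c.mu - 2) * r0 ^ (3 * c.mu - 2)))
    + c.D2 * (c.Kt2 / (Hinf c s0 r0 * c.L2m * (2 * c.mu + c.nu - 1) * r0 ^ (2 * c.mu + c.nu - 1))
      + c.K2M / (Hinf c s0 r0 * c.L2m)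
        * (Htil c s0 r0 / (Hinf c s0 r0 * (2 * c.mu + c.nu - 1) * r0 ^ (2 * c.mu + c.nu - 1))
          + c.Lt2 / (c.L2m * (3 * c.mu + c.nu - 1) * r0 ^ (3 * c.mu + c.nu - 1))))

def Phi2til (c : Cst) (s0 r0 : ℝ) : ℝ :=
  E2til c s0 r0 / (c.L2m * (c.mu + c.nu - 1) * r0 ^ (c.mu + c.nu - 1))
    + c.Lt2 / (c.L2m ^ 2 * (2 * c.mu + c.nu - 1) * r0 ^ (2 * c.mu + c.nu - 1))

/-- `Φ2inf(∞)(r0,s0)`. -/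
def Phi2infC (c : Cst) (s0 r0 : ℝ) : ℝ :=
  E2inf c s0 r0 / (c.L2M * (c.mu + c.nu - 1) * r0 ^ (c.mu + c.nu - 1))

/-- `Φ2sup(r0)`. -/
def Phi2supC (c : Cst) (r0 : ℝ) : ℝ := 1 / (c.L2m * (c.mu + c.nu - 1) * r0 ^ (c.mu + c.nu - 1))

def H2sup (c : Cst) (s0 r0 : ℝ) : ℝ :=
  c.K2M / (E2inf c s0 r0 * (c.mu + c.nu - 1) * r0 ^ (c.mu + c.nu - 1))

def H2til (c : Cst) (s0 r0 : ℝ) : ℝ :=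
  (c.Kt2 + c.K2M * E2til c s0 r0 / E2inf c s0 r0)
    / (E2inf c s0 r0 * (c.mu + c.nu - 1) * r0 ^ (c.mu + c.nu - 1))

def G2sup (c : Cst) (s0 r0 : ℝ) : ℝ :=
  H2sup c s0 r0 / (c.L2m * (c.mu + c.nu - 1) * r0 ^ (c.mu + c.nu - 1))

def G2til (c : Cst) (s0 r0 : ℝ) : ℝ :=
  H2sup c s0 r0 * Phi2til c s0 r0
    + H2til c s0 r0 / (c.L2m * (c.mu + c.nu - 1) * r0 ^ (c.mu + c.nu - 1))

def eps21 (c : Cst) (s0 r0 : ℝ) : ℝ := 2 * Phi2til c s0 r0 / Phi2infC c s0 r0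

def eps22 (c : Cst) (s0 r0 : ℝ) : ℝ :=
  G2til c s0 r0 / Hinf c s0 r0 ^ 2
    + 2 * G2sup c s0 r0 * Hsup c s0 r0 * Htil c s0 r0 / Hinf c s0 r0 ^ 4

def eps23 (c : Cst) (s0 r0 : ℝ) : ℝ :=
  Phi2supC c r0 / Phi2infC c s0 r0 * eps22 c s0 r0
    + G2sup c s0 r0 / Hinf c s0 r0 ^ 2 * eps21 c s0 r0

def eps2 (c : Cst) (s0 r0 : ℝ) : ℝ := eps21 c s0 r0 + eps22 c s0 r0 + eps23 c s0 r0

/-!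
`E2f` is `exp (-∫ E2rate)` with a nonnegative rate, and (A2) together with `Hinf ≤ H` bounds
the rate by powers `v ^ (-p)`, `p > 1`. Hence `E2inf ≤ E2f ≤ 1`, and the integrand of `Φ2` lies
between `E2inf / (L2M v^(μ+ν))` and `1 / (L2m v^(μ+ν))`.

For the Lipschitz estimate, `x ↦ exp (-x)` is 1-Lipschitz on `x ≥ 0`, so `|E2(f) - E2(g)|` is at
most the integral of `|E2rate(f) - E2rate(g)|`. Writing each difference of quotients as
`a/b - a'/b' = (a - a')/b + a'(b' - b)/(b b')` and using (A4) and the Lipschitz bound on `H`, this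
is again a sum of powers `v ^ (-p)` with `p > 1`. Every bound then follows from
`∫_{r0}^η v^(-p) ≤ r0^(1-p)/(p-1)`.
-/

lemma integral_rpow_neg_of_one_lt {r η p : ℝ} (hr : 0 < r) (hrη : r ≤ η) (hp : 1 < p) :
    ∫ v in r..η, v ^ (-p) = (r ^ (1 - p) - η ^ (1 - p)) / (p - 1) := by
  have h0 : (0 : ℝ) ∉ Set.uIcc r η := by
    rw [Set.uIcc_of_le hrη]; exact fun h => absurd h.1 (not_le.2 hr)
  rw [integral_rpow (Or.inr ⟨by linarith, h0⟩), show -p + 1 = 1 - p by ring,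
    ← neg_div_neg_eq, neg_sub, neg_sub]

lemma intervalIntegrable_rpow_of_pos {r η p : ℝ} (hr : 0 < r) (hrη : r ≤ η) :
    IntervalIntegrable (fun v : ℝ => v ^ p) volume r η :=
  intervalIntegral.intervalIntegrable_rpow
    (Or.inr (by rw [Set.uIcc_of_le hrη]; exact fun h => absurd h.1 (not_le.2 hr)))

lemma integral_const_mul_rpow_neg_le {r η p C : ℝ} (hr : 0 < r) (hrη : r ≤ η) (hp : 1 < p)
    (hC : 0 ≤ C) : ∫ v in r..η, C * v ^ (-p) ≤ C / ((p - 1) * r ^ (p - 1)) := by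
  have hη : 0 ≤ η ^ (1 - p) := Real.rpow_nonneg (hr.le.trans hrη) _
  rw [intervalIntegral.integral_const_mul, integral_rpow_neg_of_one_lt hr hrη hp,
    show 1 - p = -(p - 1) by ring, Real.rpow_neg hr.le] at *
  calc C * (((r ^ (p - 1))⁻¹ - η ^ (-(p - 1))) / (p - 1))
      ≤ C * ((r ^ (p - 1))⁻¹ / (p - 1)) := by gcongr; linarith
    _ = C / ((p - 1) * r ^ (p - 1)) := by field_simp

lemma integral_le_const_mul_rpow_neg {f : ℝ → ℝ} {r η p C : ℝ} (hr : 0 < r) (hrη : r ≤ η)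
    (hp : 1 < p) (hC : 0 ≤ C) (hf : IntervalIntegrable f volume r η)
    (hb : ∀ v ∈ Set.Icc r η, f v ≤ C * v ^ (-p)) :
    ∫ v in r..η, f v ≤ C / ((p - 1) * r ^ (p - 1)) :=
  (intervalIntegral.integral_mono_on hrη hf
    ((intervalIntegrable_rpow_of_pos hr hrη).const_mul C) hb).trans
    (integral_const_mul_rpow_neg_le hr hrη hp hC)

lemma integral_le_sum_rpow_neg {ι : Type*} (s : Finset ι) {f : ℝ → ℝ} {C p : ι → ℝ} {r η : ℝ}
    (hr : 0 < r) (hrη : r ≤ η) (hp : ∀ i ∈ s, 1 < p i) (hC : ∀ i ∈ s, 0 ≤ C i)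
    (hf : IntervalIntegrable f volume r η)
    (hb : ∀ v ∈ Set.Icc r η, f v ≤ ∑ i ∈ s, C i * v ^ (-p i)) :
    ∫ v in r..η, f v ≤ ∑ i ∈ s, C i / ((p i - 1) * r ^ (p i - 1)) := by
  have hint : ∀ i ∈ s, IntervalIntegrable (fun v => C i * v ^ (-p i)) volume r η :=
    fun i _ => (intervalIntegrable_rpow_of_pos hr hrη).const_mul _
  calc ∫ v in r..η, f v ≤ ∫ v in r..η, ∑ i ∈ s, C i * v ^ (-p i) :=
        intervalIntegral.integral_mono_on hrη hf
          (by simpa only [← Finset.sum_fn] using IntervalIntegrable.sum s hint) hb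
    _ = ∑ i ∈ s, ∫ v in r..η, C i * v ^ (-p i) := intervalIntegral.integral_finsetSum hint
    _ ≤ _ := Finset.sum_le_sum fun i hi =>
        integral_const_mul_rpow_neg_le hr hrη (hp i hi) (hC i hi)

lemma abs_integral_le_sum_rpow_neg {ι : Type*} (s : Finset ι) {f : ℝ → ℝ} {C p : ι → ℝ}
    {r η : ℝ} (hr : 0 < r) (hrη : r ≤ η) (hp : ∀ i ∈ s, 1 < p i) (hC : ∀ i ∈ s, 0 ≤ C i)
    (hf : IntervalIntegrable f volume r η)
    (hb : ∀ v ∈ Set.Icc r η, |f v| ≤ ∑ i ∈ s, C i * v ^ (-p i)) :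
    |∫ v in r..η, f v| ≤ ∑ i ∈ s, C i / ((p i - 1) * r ^ (p i - 1)) :=
  (intervalIntegral.abs_integral_le_integral_abs hrη).trans
    (integral_le_sum_rpow_neg s hr hrη hp hC hf.abs hb)

lemma abs_integral_Ioi_le_const_mul_rpow_neg {f : ℝ → ℝ} {r p C : ℝ} (hr : 0 < r) (hp : 1 < p)
    (hb : ∀ v ∈ Set.Ioi r, |f v| ≤ C * v ^ (-p)) :
    |∫ v in Set.Ioi r, f v| ≤ C * (r ^ (-(p - 1)) / (p - 1)) := by
  have hint : IntegrableOn (fun v : ℝ => C * v ^ (-p)) (Set.Ioi r) :=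
    (integrableOn_Ioi_rpow_of_lt (by linarith) hr).const_mul C
  have hbd : ∀ᵐ v ∂(volume.restrict (Set.Ioi r)), ‖f v‖ ≤ C * v ^ (-p) :=
    (ae_restrict_iff' measurableSet_Ioi).2 (ae_of_all _ hb)
  calc |∫ v in Set.Ioi r, f v| ≤ ∫ v in Set.Ioi r, C * v ^ (-p) :=
        norm_integral_le_of_norm_le hint hbd
    _ = C * (r ^ (-(p - 1)) / (p - 1)) := by
        rw [integral_const_mul, integral_Ioi_rpow_of_lt (by linarith) hr,
          show -p + 1 = -(p - 1) by ring, neg_div, div_neg, neg_neg]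

lemma integrableOn_Ioi_of_abs_le_rpow_neg {f : ℝ → ℝ} {r p C : ℝ} (hr : 0 < r) (hp : 1 < p)
    (hf : ContinuousOn f (Set.Ioi r)) (hb : ∀ v ∈ Set.Ioi r, |f v| ≤ C * v ^ (-p)) :
    IntegrableOn f (Set.Ioi r) :=
  Integrable.mono' ((integrableOn_Ioi_rpow_of_lt (by linarith) hr).const_mul C)
    (hf.aestronglyMeasurable measurableSet_Ioi)
    ((ae_restrict_iff' measurableSet_Ioi).2 (ae_of_all _ hb))

lemma abs_exp_neg_sub_exp_neg_le {x y : ℝ} (hx : 0 ≤ x) (hy : 0 ≤ y) :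
    |Real.exp (-x) - Real.exp (-y)| ≤ |x - y| := by
  wlog h : y ≤ x generalizing x y
  · rw [abs_sub_comm, abs_sub_comm x y]; exact this hy hx (le_of_not_ge h)
  have h1 : Real.exp (-x) ≤ Real.exp (-y) := Real.exp_le_exp.2 (by linarith)
  have h2 : Real.exp (-x) = Real.exp (-y) * Real.exp (-(x - y)) := by
    rw [← Real.exp_add]; ring_nf
  have h3 : 1 - (x - y) ≤ Real.exp (-(x - y)) := by
    have := Real.add_one_le_exp (-(x - y)); linarith
  have h4 : Real.exp (-y) ≤ 1 := Real.exp_le_one_iff.2 (by linarith)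
  have h5 : 0 < Real.exp (-y) := Real.exp_pos _
  rw [abs_of_nonpos (by linarith), abs_of_nonneg (by linarith)]
  nlinarith

lemma abs_div_sub_div_le {a₁ a₂ b₁ b₂ A Δa Δb m : ℝ} (hm : 0 < m) (hb₁ : m ≤ b₁) (hb₂ : m ≤ b₂)
    (ha₂ : |a₂| ≤ A) (ha : |a₁ - a₂| ≤ Δa) (hb : |b₁ - b₂| ≤ Δb) :
    |a₁ / b₁ - a₂ / b₂| ≤ Δa / m + A * Δb / m ^ 2 := by
  have hb₁' : 0 < b₁ := hm.trans_le hb₁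
  have hb₂' : 0 < b₂ := hm.trans_le hb₂
  have hA : 0 ≤ A := (abs_nonneg _).trans ha₂
  have hΔb : 0 ≤ Δb := (abs_nonneg _).trans hb
  calc |a₁ / b₁ - a₂ / b₂| = |(a₁ - a₂) / b₁ + a₂ * (b₂ - b₁) / (b₁ * b₂)| := by
        congr 1; field_simp; ring
    _ ≤ |a₁ - a₂| / b₁ + |a₂| * |b₁ - b₂| / (b₁ * b₂) := by
        refine (abs_add_le _ _).trans (le_of_eq ?_)
        rw [abs_div, abs_div, abs_mul, abs_sub_comm b₂, abs_of_pos hb₁',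
          abs_of_pos (mul_pos hb₁' hb₂')]
    _ ≤ Δa / m + A * Δb / m ^ 2 := by
        gcongr
        · exact (abs_nonneg _).trans ha
        · rw [sq]; exact mul_le_mul hb₁ hb₂ hm.le hb₁'.le

lemma mul_rpow_neg_div_rpow {v : ℝ} (hv : 0 < v) (C a b : ℝ) :
    C * v ^ (-a) / v ^ b = C * v ^ (-(a + b)) := by
  rw [neg_add, Real.rpow_add hv, Real.rpow_neg hv.le b]; ring

lemma supOn_nonneg (S : Set ℝ) (f : ℝ → ℝ) : 0 ≤ supOn S f :=
  Real.iSup_nonneg fun _ => abs_nonneg _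

def E2rate (c : Cst) (s0 r0 : ℝ) (L1 N1 K1 L2 N2 K2 : (ℝ → ℝ) → ℝ → ℝ) (f1 f2 : ℝ → ℝ)
    (v : ℝ) : ℝ :=
  2 * c.a * v * (N2 f2 v / L2 f2 v)
    + c.D2 / Hf c s0 r0 L1 N1 K1 L2 N2 K2 f1 f2 * (K2 f2 v / (L2 f2 v * v ^ c.nu))

section Setting

variable {c : Cst} {s0 r0 : ℝ} {L1 N1 K1 L2 N2 K2 : (ℝ → ℝ) → ℝ → ℝ} {f1 f2 g1 g2 : ℝ → ℝ}
  {v : ℝ}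

namespace PosC

lemma a_pos (h : PosC c s0 r0) : 0 < c.a := h.1
lemma s0_pos (h : PosC c s0 r0) : 0 < s0 := by unfold PosC at h; tauto
lemma s0_lt_r0 (h : PosC c s0 r0) : s0 < r0 := by unfold PosC at h; tauto
lemma r0_pos (h : PosC c s0 r0) : 0 < r0 := h.s0_pos.trans h.s0_lt_r0
lemma two_lt_mu (h : PosC c s0 r0) : 2 < c.mu := by unfold PosC at h; tauto
lemma one_lt_mu_add_nu (h : PosC c s0 r0) : 1 < c.mu + c.nu := by unfold PosC at h; linarith
lemma D2_pos (h : PosC c s0 r0) : 0 < c.D2 := by unfold PosC at h; tauto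
lemma K1m_pos (h : PosC c s0 r0) : 0 < c.K1m := by unfold PosC at h; tauto
lemma L2m_pos (h : PosC c s0 r0) : 0 < c.L2m := by unfold PosC at h; tauto
lemma L2M_pos (h : PosC c s0 r0) : 0 < c.L2M := by unfold PosC at h; tauto
lemma N2m_pos (h : PosC c s0 r0) : 0 < c.N2m := by unfold PosC at h; tauto
lemma N2M_pos (h : PosC c s0 r0) : 0 < c.N2M := by unfold PosC at h; tauto
lemma K2m_pos (h : PosC c s0 r0) : 0 < c.K2m := by unfold PosC at h; tauto
lemma K2M_pos (h : PosC c s0 r0) : 0 < c.K2M := by unfold PosC at h; tauto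
lemma Kt1_pos (h : PosC c s0 r0) : 0 < c.Kt1 := by unfold PosC at h; tauto
lemma Lt2_pos (h : PosC c s0 r0) : 0 < c.Lt2 := by unfold PosC at h; tauto
lemma Nt2_pos (h : PosC c s0 r0) : 0 < c.Nt2 := by unfold PosC at h; tauto
lemma Kt2_pos (h : PosC c s0 r0) : 0 < c.Kt2 := by unfold PosC at h; tauto

end PosC

namespace Assum

lemma continuousOn_K1 (hA : Assum c s0 r0 L1 N1 K1 L2 N2 K2) (hf1 : f1 ∈ C1 s0 r0) :
    ContinuousOn (K1 f1) (Set.Icc s0 r0) := (hA.1 f1 hf1).2.2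

lemma continuousOn_L2 (hA : Assum c s0 r0 L1 N1 K1 L2 N2 K2) (hf2 : f2 ∈ Mset r0) :
    ContinuousOn (L2 f2) (Set.Ici r0) := (hA.2.1 f2 hf2).1

lemma continuousOn_N2 (hA : Assum c s0 r0 L1 N1 K1 L2 N2 K2) (hf2 : f2 ∈ Mset r0) :
    ContinuousOn (N2 f2) (Set.Ici r0) := (hA.2.1 f2 hf2).2.1

lemma continuousOn_K2 (hA : Assum c s0 r0 L1 N1 K1 L2 N2 K2) (hf2 : f2 ∈ Mset r0) :
    ContinuousOn (K2 f2) (Set.Ici r0) := (hA.2.1 f2 hf2).2.2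

lemma K1_ge (hA : Assum c s0 r0 L1 N1 K1 L2 N2 K2) (hf1 : f1 ∈ C1 s0 r0)
    (hv : v ∈ Set.Icc s0 r0) : c.K1m * v ^ (-c.mu) ≤ K1 f1 v :=
  (hA.2.2.1 f1 hf1 v hv).2.2.2.2.1

lemma L2_ge (hA : Assum c s0 r0 L1 N1 K1 L2 N2 K2) (hf2 : f2 ∈ Mset r0)
    (hv : v ∈ Set.Ici r0) : c.L2m * v ^ c.mu ≤ L2 f2 v :=
  (hA.2.2.2.1 f2 hf2 v hv).1

lemma L2_le (hA : Assum c s0 r0 L1 N1 K1 L2 N2 K2) (hf2 : f2 ∈ Mset r0)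
    (hv : v ∈ Set.Ici r0) : L2 f2 v ≤ c.L2M * v ^ c.mu :=
  (hA.2.2.2.1 f2 hf2 v hv).2.1

lemma N2_ge (hA : Assum c s0 r0 L1 N1 K1 L2 N2 K2) (hf2 : f2 ∈ Mset r0)
    (hv : v ∈ Set.Ici r0) : c.N2m * v ^ (-c.mu) ≤ N2 f2 v :=
  (hA.2.2.2.1 f2 hf2 v hv).2.2.1

lemma N2_le (hA : Assum c s0 r0 L1 N1 K1 L2 N2 K2) (hf2 : f2 ∈ Mset r0)
    (hv : v ∈ Set.Ici r0) : N2 f2 v ≤ c.N2M * v ^ (-c.mu) :=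
  (hA.2.2.2.1 f2 hf2 v hv).2.2.2.1

lemma K2_ge (hA : Assum c s0 r0 L1 N1 K1 L2 N2 K2) (hf2 : f2 ∈ Mset r0)
    (hv : v ∈ Set.Ici r0) : c.K2m * v ^ (-c.mu) ≤ K2 f2 v :=
  (hA.2.2.2.1 f2 hf2 v hv).2.2.2.2.1

lemma K2_le (hA : Assum c s0 r0 L1 N1 K1 L2 N2 K2) (hf2 : f2 ∈ Mset r0)
    (hv : v ∈ Set.Ici r0) : K2 f2 v ≤ c.K2M * v ^ (-c.mu) :=
  (hA.2.2.2.1 f2 hf2 v hv).2.2.2.2.2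

lemma abs_K1_sub_le (hA : Assum c s0 r0 L1 N1 K1 L2 N2 K2) (hf1 : f1 ∈ C1 s0 r0)
    (hg1 : g1 ∈ C1 s0 r0) (hv : v ∈ Set.Icc s0 r0) :
    |K1 f1 v - K1 g1 v| ≤ c.Kt1 * v ^ (-c.mu) * supOn (Set.Icc s0 r0) (f1 - g1) :=
  (hA.2.2.2.2.1 f1 hf1 g1 hg1 v hv).2.2

lemma abs_L2_sub_le (hA : Assum c s0 r0 L1 N1 K1 L2 N2 K2) (hf2 : f2 ∈ Mset r0)
    (hg2 : g2 ∈ Mset r0) (hv : v ∈ Set.Ici r0) :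
    |L2 f2 v - L2 g2 v| ≤ c.Lt2 * supOn (Set.Ici r0) (f2 - g2) :=
  (hA.2.2.2.2.2 f2 hf2 g2 hg2 v hv).1

lemma abs_N2_sub_le (hA : Assum c s0 r0 L1 N1 K1 L2 N2 K2) (hf2 : f2 ∈ Mset r0)
    (hg2 : g2 ∈ Mset r0) (hv : v ∈ Set.Ici r0) :
    |N2 f2 v - N2 g2 v| ≤ c.Nt2 * supOn (Set.Ici r0) (f2 - g2) :=
  (hA.2.2.2.2.2 f2 hf2 g2 hg2 v hv).2.1

lemma abs_K2_sub_le (hA : Assum c s0 r0 L1 N1 K1 L2 N2 K2) (hf2 : f2 ∈ Mset r0)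
    (hg2 : g2 ∈ Mset r0) (hv : v ∈ Set.Ici r0) :
    |K2 f2 v - K2 g2 v| ≤ c.Kt2 * v ^ (-c.mu) * supOn (Set.Ici r0) (f2 - g2) :=
  (hA.2.2.2.2.2 f2 hf2 g2 hg2 v hv).2.2

end Assum

local notation "𝓗" => Hf c s0 r0 L1 N1 K1 L2 N2 K2
local notation "δ" => pairNorm s0 r0 f1 f2 g1 g2

lemma L2_pos (hpos : PosC c s0 r0) (hA : Assum c s0 r0 L1 N1 K1 L2 N2 K2) (hf2 : f2 ∈ Mset r0)
    (hv : v ∈ Set.Ici r0) : 0 < L2 f2 v :=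
  (mul_pos hpos.L2m_pos (Real.rpow_pos_of_pos (hpos.r0_pos.trans_le hv) _)).trans_le
    (hA.L2_ge hf2 hv)

lemma N2_pos (hpos : PosC c s0 r0) (hA : Assum c s0 r0 L1 N1 K1 L2 N2 K2) (hf2 : f2 ∈ Mset r0)
    (hv : v ∈ Set.Ici r0) : 0 < N2 f2 v :=
  (mul_pos hpos.N2m_pos (Real.rpow_pos_of_pos (hpos.r0_pos.trans_le hv) _)).trans_le
    (hA.N2_ge hf2 hv)

lemma K2_pos (hpos : PosC c s0 r0) (hA : Assum c s0 r0 L1 N1 K1 L2 N2 K2) (hf2 : f2 ∈ Mset r0)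
    (hv : v ∈ Set.Ici r0) : 0 < K2 f2 v :=
  (mul_pos hpos.K2m_pos (Real.rpow_pos_of_pos (hpos.r0_pos.trans_le hv) _)).trans_le
    (hA.K2_ge hf2 hv)

lemma supOn_Icc_le_pairNorm : supOn (Set.Icc s0 r0) (f1 - g1) ≤ δ := le_max_left _ _

lemma supOn_Ici_le_pairNorm : supOn (Set.Ici r0) (f2 - g2) ≤ δ := le_max_right _ _

lemma pairNorm_nonneg : 0 ≤ δ :=
  (supOn_nonneg _ _).trans supOn_Icc_le_pairNorm

lemma Hinf_pos (hpos : PosC c s0 r0) : 0 < Hinf c s0 r0 := by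
  have hq : 0 < c.mu + c.nu - 1 := by linarith [hpos.one_lt_mu_add_nu]
  have hr : r0 ^ (-(c.mu + c.nu - 1)) < s0 ^ (-(c.mu + c.nu - 1)) :=
    Real.rpow_lt_rpow_of_neg hpos.s0_pos hpos.s0_lt_r0 (by linarith)
  exact mul_pos (div_pos hpos.K1m_pos hq) (sub_pos.2 hr)

lemma Htil_pos (hpos : PosC c s0 r0) : 0 < Htil c s0 r0 := by
  have := hpos.Kt1_pos
  have := hpos.Kt2_pos
  have := hpos.s0_pos
  have := hpos.r0_pos
  have : 0 < c.mu + c.nu - 1 := by linarith [hpos.one_lt_mu_add_nu]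
  unfold Htil
  positivity

lemma continuousOn_K1_div_rpow (hpos : PosC c s0 r0) (hA : Assum c s0 r0 L1 N1 K1 L2 N2 K2)
    (hf1 : f1 ∈ C1 s0 r0) : ContinuousOn (fun v => K1 f1 v / v ^ c.nu) (Set.Icc s0 r0) :=
  (hA.continuousOn_K1 hf1).div (continuousOn_id.rpow_const fun _ hv =>
    Or.inl (hpos.s0_pos.trans_le hv.1).ne')
    fun _ hv => (Real.rpow_pos_of_pos (hpos.s0_pos.trans_le hv.1) _).ne'

lemma continuousOn_K2_div_rpow (hpos : PosC c s0 r0) (hA : Assum c s0 r0 L1 N1 K1 L2 N2 K2)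
    (hf2 : f2 ∈ Mset r0) : ContinuousOn (fun v => K2 f2 v / v ^ c.nu) (Set.Ici r0) :=
  (hA.continuousOn_K2 hf2).div (continuousOn_id.rpow_const fun _ hv =>
    Or.inl (hpos.r0_pos.trans_le hv).ne')
    fun _ hv => (Real.rpow_pos_of_pos (hpos.r0_pos.trans_le hv) _).ne'

lemma Hinf_le_Hf (hpos : PosC c s0 r0) (hA : Assum c s0 r0 L1 N1 K1 L2 N2 K2)
    (hf1 : f1 ∈ C1 s0 r0) (hf2 : f2 ∈ Mset r0) : Hinf c s0 r0 ≤ 𝓗 f1 f2 := by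
  have hs0 := hpos.s0_pos
  have hsr := hpos.s0_lt_r0.le
  have hlow : ∀ v ∈ Set.Icc s0 r0, c.K1m * v ^ (-(c.mu + c.nu)) ≤ K1 f1 v / v ^ c.nu :=
    fun v hv => by
      rw [← mul_rpow_neg_div_rpow (hs0.trans_le hv.1)]
      exact div_le_div_of_nonneg_right (hA.K1_ge hf1 hv)
        (Real.rpow_nonneg (hs0.le.trans hv.1) _)
  have hfinite : Hinf c s0 r0 ≤ ∫ v in s0..r0, K1 f1 v / v ^ c.nu :=
    calc Hinf c s0 r0 = ∫ v in s0..r0, c.K1m * v ^ (-(c.mu + c.nu)) := by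
          rw [intervalIntegral.integral_const_mul,
            integral_rpow_neg_of_one_lt hs0 hsr hpos.one_lt_mu_add_nu, Hinf,
            show 1 - (c.mu + c.nu) = -(c.mu + c.nu - 1) by ring]
          ring
      _ ≤ _ := intervalIntegral.integral_mono_on hsr
          ((intervalIntegrable_rpow_of_pos hs0 hsr).const_mul _)
          ((continuousOn_K1_div_rpow hpos hA hf1).intervalIntegrable_of_Icc hsr) hlow
  have htail : 0 ≤ ∫ v in Set.Ioi r0, K2 f2 v / v ^ c.nu :=
    setIntegral_nonneg measurableSet_Ioi fun v hv =>
      div_nonneg (K2_pos hpos hA hf2 (Set.Ioi_subset_Ici_self hv)).le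
        (Real.rpow_nonneg (hpos.r0_pos.trans hv).le _)
  rw [Hf]
  linarith

lemma Hf_pos (hpos : PosC c s0 r0) (hA : Assum c s0 r0 L1 N1 K1 L2 N2 K2)
    (hf1 : f1 ∈ C1 s0 r0) (hf2 : f2 ∈ Mset r0) : 0 < 𝓗 f1 f2 :=
  (Hinf_pos hpos).trans_le (Hinf_le_Hf hpos hA hf1 hf2)

lemma abs_integral_K1_div_rpow_sub_le (hpos : PosC c s0 r0)
    (hA : Assum c s0 r0 L1 N1 K1 L2 N2 K2) (hf1 : f1 ∈ C1 s0 r0) (hg1 : g1 ∈ C1 s0 r0) :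
    |(∫ v in s0..r0, K1 f1 v / v ^ c.nu) - ∫ v in s0..r0, K1 g1 v / v ^ c.nu|
      ≤ c.Kt1 * supOn (Set.Icc s0 r0) (f1 - g1)
        / ((c.mu + c.nu - 1) * s0 ^ (c.mu + c.nu - 1)) := by
  have hsr := hpos.s0_lt_r0.le
  have hf := (continuousOn_K1_div_rpow hpos hA hf1).intervalIntegrable_of_Icc (μ := volume) hsr
  have hg := (continuousOn_K1_div_rpow hpos hA hg1).intervalIntegrable_of_Icc (μ := volume) hsr
  rw [← intervalIntegral.integral_sub hf hg]
  refine (intervalIntegral.abs_integral_le_integral_abs (μ := volume) hsr).trans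
    (integral_le_const_mul_rpow_neg hpos.s0_pos hsr hpos.one_lt_mu_add_nu
      (mul_nonneg hpos.Kt1_pos.le (supOn_nonneg _ _)) (hf.sub hg).abs fun v hv => ?_)
  have hv0 := hpos.s0_pos.trans_le hv.1
  rw [div_sub_div_same, abs_div, abs_of_pos (Real.rpow_pos_of_pos hv0 _),
    ← mul_rpow_neg_div_rpow hv0, mul_right_comm]
  exact div_le_div_of_nonneg_right (hA.abs_K1_sub_le hf1 hg1 hv)
    (Real.rpow_nonneg hv0.le _)

lemma abs_integral_K2_div_rpow_sub_le (hpos : PosC c s0 r0)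
    (hA : Assum c s0 r0 L1 N1 K1 L2 N2 K2) (hf2 : f2 ∈ Mset r0) (hg2 : g2 ∈ Mset r0) :
    |(∫ v in Set.Ioi r0, K2 f2 v / v ^ c.nu) - ∫ v in Set.Ioi r0, K2 g2 v / v ^ c.nu|
      ≤ c.Kt2 * supOn (Set.Ici r0) (f2 - g2)
        * (r0 ^ (-(c.mu + c.nu - 1)) / (c.mu + c.nu - 1)) := by
  have hr0 := hpos.r0_pos
  have hq := hpos.one_lt_mu_add_nu
  have habs : ∀ p2 ∈ Mset r0, ∀ v ∈ Set.Ioi r0,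
      |K2 p2 v / v ^ c.nu| ≤ c.K2M * v ^ (-(c.mu + c.nu)) := fun p2 hp2 v hv => by
    have hv0 := hr0.trans hv
    have hv' := Set.Ioi_subset_Ici_self hv
    rw [abs_of_pos (div_pos (K2_pos hpos hA hp2 hv') (Real.rpow_pos_of_pos hv0 _)),
      ← mul_rpow_neg_div_rpow hv0]
    exact div_le_div_of_nonneg_right (hA.K2_le hp2 hv') (Real.rpow_nonneg hv0.le _)
  have hint : ∀ p2 ∈ Mset r0, IntegrableOn (fun v => K2 p2 v / v ^ c.nu) (Set.Ioi r0) :=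
    fun p2 hp2 => integrableOn_Ioi_of_abs_le_rpow_neg hr0 hq
      ((continuousOn_K2_div_rpow hpos hA hp2).mono Set.Ioi_subset_Ici_self) (habs p2 hp2)
  rw [← integral_sub (hint f2 hf2) (hint g2 hg2)]
  refine abs_integral_Ioi_le_const_mul_rpow_neg hr0 hq fun v hv => ?_
  have hv0 := hr0.trans hv
  rw [div_sub_div_same, abs_div, abs_of_pos (Real.rpow_pos_of_pos hv0 _),
    ← mul_rpow_neg_div_rpow hv0, mul_right_comm]
  exact div_le_div_of_nonneg_right (hA.abs_K2_sub_le hf2 hg2 (Set.Ioi_subset_Ici_self hv))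
    (Real.rpow_nonneg hv0.le _)

lemma abs_Hf_sub_le (hpos : PosC c s0 r0) (hA : Assum c s0 r0 L1 N1 K1 L2 N2 K2)
    (hf1 : f1 ∈ C1 s0 r0) (hf2 : f2 ∈ Mset r0) (hg1 : g1 ∈ C1 s0 r0) (hg2 : g2 ∈ Mset r0) :
    |𝓗 f1 f2 - 𝓗 g1 g2| ≤ Htil c s0 r0 * δ := by
  have hs0 := hpos.s0_pos
  have hq : 0 < c.mu + c.nu - 1 := by linarith [hpos.one_lt_mu_add_nu]
  have := hpos.Kt1_pos
  have := hpos.Kt2_pos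
  have := hpos.r0_pos
  calc |𝓗 f1 f2 - 𝓗 g1 g2|
      ≤ |(∫ v in s0..r0, K1 f1 v / v ^ c.nu) - ∫ v in s0..r0, K1 g1 v / v ^ c.nu|
        + |(∫ v in Set.Ioi r0, K2 f2 v / v ^ c.nu) - ∫ v in Set.Ioi r0, K2 g2 v / v ^ c.nu| := by
        rw [Hf, Hf, add_sub_add_comm]; exact abs_add_le _ _
    _ ≤ c.Kt1 * supOn (Set.Icc s0 r0) (f1 - g1) / ((c.mu + c.nu - 1) * s0 ^ (c.mu + c.nu - 1))
        + c.Kt2 * supOn (Set.Ici r0) (f2 - g2)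
          * (r0 ^ (-(c.mu + c.nu - 1)) / (c.mu + c.nu - 1)) :=
        add_le_add (abs_integral_K1_div_rpow_sub_le hpos hA hf1 hg1)
          (abs_integral_K2_div_rpow_sub_le hpos hA hf2 hg2)
    _ ≤ c.Kt1 * δ / ((c.mu + c.nu - 1) * s0 ^ (c.mu + c.nu - 1))
        + c.Kt2 * δ * (r0 ^ (-(c.mu + c.nu - 1)) / (c.mu + c.nu - 1)) := by
        gcongr
        exacts [supOn_Icc_le_pairNorm, supOn_Ici_le_pairNorm]
    _ = Htil c s0 r0 * δ := by
        rw [Htil, Real.rpow_neg hs0.le]; field_simp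

local notation "𝓡" => E2rate c s0 r0 L1 N1 K1 L2 N2 K2
local notation "𝓔" => E2f c s0 r0 L1 N1 K1 L2 N2 K2

lemma L2m_mul_rpow_le (hpos : PosC c s0 r0) (hA : Assum c s0 r0 L1 N1 K1 L2 N2 K2)
    (hf2 : f2 ∈ Mset r0) (hv : v ∈ Set.Ici r0) :
    c.L2m * v ^ (c.mu + c.nu) ≤ L2 f2 v * v ^ c.nu := by
  have hv0 := hpos.r0_pos.trans_le hv
  rw [Real.rpow_add hv0, ← mul_assoc]
  exact mul_le_mul_of_nonneg_right (hA.L2_ge hf2 hv) (Real.rpow_nonneg hv0.le _)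

lemma L2_mul_rpow_le (hpos : PosC c s0 r0) (hA : Assum c s0 r0 L1 N1 K1 L2 N2 K2)
    (hf2 : f2 ∈ Mset r0) (hv : v ∈ Set.Ici r0) :
    L2 f2 v * v ^ c.nu ≤ c.L2M * v ^ (c.mu + c.nu) := by
  have hv0 := hpos.r0_pos.trans_le hv
  rw [Real.rpow_add hv0, ← mul_assoc]
  exact mul_le_mul_of_nonneg_right (hA.L2_le hf2 hv) (Real.rpow_nonneg hv0.le _)

lemma abs_L2_mul_rpow_sub_le (hpos : PosC c s0 r0) (hA : Assum c s0 r0 L1 N1 K1 L2 N2 K2)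
    (hf2 : f2 ∈ Mset r0) (hg2 : g2 ∈ Mset r0) (hv : v ∈ Set.Ici r0) :
    |L2 f2 v * v ^ c.nu - L2 g2 v * v ^ c.nu| ≤ c.Lt2 * δ * v ^ c.nu := by
  have hv0 := hpos.r0_pos.trans_le hv
  rw [← sub_mul, abs_mul, abs_of_pos (Real.rpow_pos_of_pos hv0 _)]
  gcongr
  exact (hA.abs_L2_sub_le hf2 hg2 hv).trans
    (mul_le_mul_of_nonneg_left supOn_Ici_le_pairNorm hpos.Lt2_pos.le)

lemma E2rate_nonneg (hpos : PosC c s0 r0) (hA : Assum c s0 r0 L1 N1 K1 L2 N2 K2)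
    (hf1 : f1 ∈ C1 s0 r0) (hf2 : f2 ∈ Mset r0) (hv : v ∈ Set.Ici r0) : 0 ≤ 𝓡 f1 f2 v := by
  have := hpos.r0_pos.trans_le hv
  have := L2_pos hpos hA hf2 hv
  have := N2_pos hpos hA hf2 hv
  have := K2_pos hpos hA hf2 hv
  have := Hf_pos hpos hA hf1 hf2
  have := hpos.a_pos
  have := hpos.D2_pos
  unfold E2rate
  positivity

lemma continuousOn_E2rate (hpos : PosC c s0 r0) (hA : Assum c s0 r0 L1 N1 K1 L2 N2 K2)
    (hf2 : f2 ∈ Mset r0) : ContinuousOn (𝓡 f1 f2) (Set.Ici r0) := by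
  have hL := hA.continuousOn_L2 hf2
  have hL0 : ∀ v ∈ Set.Ici r0, L2 f2 v ≠ 0 := fun v hv => (L2_pos hpos hA hf2 hv).ne'
  have hrpow : ContinuousOn (fun v : ℝ => v ^ c.nu) (Set.Ici r0) :=
    continuousOn_id.rpow_const fun v hv => Or.inl (hpos.r0_pos.trans_le hv).ne'
  exact ((continuousOn_const.mul continuousOn_id).mul ((hA.continuousOn_N2 hf2).div hL hL0)).add
    (continuousOn_const.mul ((hA.continuousOn_K2 hf2).div (hL.mul hrpow) fun v hv =>
      mul_ne_zero (hL0 v hv) (Real.rpow_pos_of_pos (hpos.r0_pos.trans_le hv) _).ne'))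

lemma N2_div_L2_le (hpos : PosC c s0 r0) (hA : Assum c s0 r0 L1 N1 K1 L2 N2 K2)
    (hf2 : f2 ∈ Mset r0) (hv : v ∈ Set.Ici r0) :
    N2 f2 v / L2 f2 v ≤ c.N2M * v ^ (-c.mu) / (c.L2m * v ^ c.mu) := by
  have := hpos.r0_pos.trans_le hv
  have := hpos.N2M_pos
  have := hpos.L2m_pos
  exact div_le_div₀ (by positivity) (hA.N2_le hf2 hv) (by positivity) (hA.L2_ge hf2 hv)

lemma K2_div_L2_mul_rpow_le (hpos : PosC c s0 r0) (hA : Assum c s0 r0 L1 N1 K1 L2 N2 K2)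
    (hf2 : f2 ∈ Mset r0) (hv : v ∈ Set.Ici r0) :
    K2 f2 v / (L2 f2 v * v ^ c.nu) ≤ c.K2M * v ^ (-c.mu) / (c.L2m * v ^ (c.mu + c.nu)) := by
  have := hpos.r0_pos.trans_le hv
  have := hpos.K2M_pos
  have := hpos.L2m_pos
  exact div_le_div₀ (by positivity) (hA.K2_le hf2 hv) (by positivity)
    (L2m_mul_rpow_le hpos hA hf2 hv)

lemma E2rate_le (hpos : PosC c s0 r0) (hA : Assum c s0 r0 L1 N1 K1 L2 N2 K2)
    (hf1 : f1 ∈ C1 s0 r0) (hf2 : f2 ∈ Mset r0) (hv : v ∈ Set.Ici r0) :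
    𝓡 f1 f2 v ≤ 2 * c.a * c.N2M / c.L2m * v ^ (-(2 * c.mu - 1))
      + c.D2 * c.K2M / (Hinf c s0 r0 * c.L2m) * v ^ (-(2 * c.mu + c.nu)) := by
  have hv0 := hpos.r0_pos.trans_le hv
  have := hpos.a_pos
  have := hpos.K2M_pos
  calc 𝓡 f1 f2 v
      ≤ 2 * c.a * v * (c.N2M * v ^ (-c.mu) / (c.L2m * v ^ c.mu))
        + c.D2 / Hinf c s0 r0 * (c.K2M * v ^ (-c.mu) / (c.L2m * v ^ (c.mu + c.nu))) :=
        add_le_add (mul_le_mul_of_nonneg_left (N2_div_L2_le hpos hA hf2 hv) (by positivity))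
          (mul_le_mul (div_le_div_of_nonneg_left hpos.D2_pos.le (Hinf_pos hpos)
            (Hinf_le_Hf hpos hA hf1 hf2)) (K2_div_L2_mul_rpow_le hpos hA hf2 hv)
            (div_nonneg (K2_pos hpos hA hf2 hv).le
              (mul_pos (L2_pos hpos hA hf2 hv) (Real.rpow_pos_of_pos hv0 _)).le)
            (div_nonneg hpos.D2_pos.le (Hinf_pos hpos).le))
    _ = _ := by
        rw [show -(2 * c.mu - 1) = 1 + -c.mu + -c.mu by ring,
          show -(2 * c.mu + c.nu) = -c.mu + -c.mu + -c.nu by ring]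
        simp only [Real.rpow_add hv0, Real.rpow_one, Real.rpow_neg hv0.le]
        field_simp

lemma abs_N2_div_L2_sub_le (hpos : PosC c s0 r0) (hA : Assum c s0 r0 L1 N1 K1 L2 N2 K2)
    (hf2 : f2 ∈ Mset r0) (hg2 : g2 ∈ Mset r0) (hv : v ∈ Set.Ici r0) :
    |N2 f2 v / L2 f2 v - N2 g2 v / L2 g2 v|
      ≤ c.Nt2 * δ / (c.L2m * v ^ c.mu)
        + c.N2M * v ^ (-c.mu) * (c.Lt2 * δ) / (c.L2m * v ^ c.mu) ^ 2 :=
  abs_div_sub_div_le (mul_pos hpos.L2m_pos (Real.rpow_pos_of_pos (hpos.r0_pos.trans_le hv) _))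
    (hA.L2_ge hf2 hv) (hA.L2_ge hg2 hv)
    ((abs_of_pos (N2_pos hpos hA hg2 hv)).trans_le (hA.N2_le hg2 hv))
    ((hA.abs_N2_sub_le hf2 hg2 hv).trans
      (mul_le_mul_of_nonneg_left supOn_Ici_le_pairNorm hpos.Nt2_pos.le))
    ((hA.abs_L2_sub_le hf2 hg2 hv).trans
      (mul_le_mul_of_nonneg_left supOn_Ici_le_pairNorm hpos.Lt2_pos.le))

lemma abs_K2_div_L2_mul_rpow_sub_le (hpos : PosC c s0 r0)
    (hA : Assum c s0 r0 L1 N1 K1 L2 N2 K2) (hf2 : f2 ∈ Mset r0) (hg2 : g2 ∈ Mset r0)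
    (hv : v ∈ Set.Ici r0) :
    |K2 f2 v / (L2 f2 v * v ^ c.nu) - K2 g2 v / (L2 g2 v * v ^ c.nu)|
      ≤ c.Kt2 * v ^ (-c.mu) * δ / (c.L2m * v ^ (c.mu + c.nu))
        + c.K2M * v ^ (-c.mu) * (c.Lt2 * δ * v ^ c.nu) / (c.L2m * v ^ (c.mu + c.nu)) ^ 2 :=
  have hv0 := hpos.r0_pos.trans_le hv
  abs_div_sub_div_le (mul_pos hpos.L2m_pos (Real.rpow_pos_of_pos hv0 _))
    (L2m_mul_rpow_le hpos hA hf2 hv) (L2m_mul_rpow_le hpos hA hg2 hv)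
    ((abs_of_pos (K2_pos hpos hA hg2 hv)).trans_le (hA.K2_le hg2 hv))
    ((hA.abs_K2_sub_le hf2 hg2 hv).trans (mul_le_mul_of_nonneg_left supOn_Ici_le_pairNorm
      (mul_nonneg hpos.Kt2_pos.le (Real.rpow_nonneg hv0.le _))))
    (abs_L2_mul_rpow_sub_le hpos hA hf2 hg2 hv)

lemma abs_K2_div_L2_mul_rpow_div_Hf_sub_le (hpos : PosC c s0 r0)
    (hA : Assum c s0 r0 L1 N1 K1 L2 N2 K2) (hf1 : f1 ∈ C1 s0 r0) (hf2 : f2 ∈ Mset r0)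
    (hg1 : g1 ∈ C1 s0 r0) (hg2 : g2 ∈ Mset r0) (hv : v ∈ Set.Ici r0) :
    |K2 f2 v / (L2 f2 v * v ^ c.nu) / 𝓗 f1 f2 - K2 g2 v / (L2 g2 v * v ^ c.nu) / 𝓗 g1 g2|
      ≤ (c.Kt2 * v ^ (-c.mu) * δ / (c.L2m * v ^ (c.mu + c.nu))
          + c.K2M * v ^ (-c.mu) * (c.Lt2 * δ * v ^ c.nu) / (c.L2m * v ^ (c.mu + c.nu)) ^ 2)
          / Hinf c s0 r0
        + c.K2M * v ^ (-c.mu) / (c.L2m * v ^ (c.mu + c.nu)) * (Htil c s0 r0 * δ)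
          / Hinf c s0 r0 ^ 2 := by
  have hv0 := hpos.r0_pos.trans_le hv
  refine abs_div_sub_div_le (Hinf_pos hpos) (Hinf_le_Hf hpos hA hf1 hf2)
    (Hinf_le_Hf hpos hA hg1 hg2) ?_ (abs_K2_div_L2_mul_rpow_sub_le hpos hA hf2 hg2 hv)
    (abs_Hf_sub_le hpos hA hf1 hf2 hg1 hg2)
  rw [abs_of_pos (div_pos (K2_pos hpos hA hg2 hv)
    (mul_pos (L2_pos hpos hA hg2 hv) (Real.rpow_pos_of_pos hv0 _)))]
  exact K2_div_L2_mul_rpow_le hpos hA hg2 hv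

lemma abs_E2rate_sub_le (hpos : PosC c s0 r0) (hA : Assum c s0 r0 L1 N1 K1 L2 N2 K2)
    (hf1 : f1 ∈ C1 s0 r0) (hf2 : f2 ∈ Mset r0) (hg1 : g1 ∈ C1 s0 r0) (hg2 : g2 ∈ Mset r0)
    (hv : v ∈ Set.Ici r0) :
    |𝓡 f1 f2 v - 𝓡 g1 g2 v|
      ≤ 2 * c.a * c.Nt2 * δ / c.L2m * v ^ (-(c.mu - 1))
        + 2 * c.a * c.N2M * c.Lt2 * δ / c.L2m ^ 2 * v ^ (-(3 * c.mu - 1))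
        + (c.D2 * c.Kt2 * δ / (Hinf c s0 r0 * c.L2m)
          + c.D2 * c.K2M * (Htil c s0 r0 * δ) / (Hinf c s0 r0 ^ 2 * c.L2m))
          * v ^ (-(2 * c.mu + c.nu))
        + c.D2 * c.K2M * c.Lt2 * δ / (Hinf c s0 r0 * c.L2m ^ 2) * v ^ (-(3 * c.mu + c.nu)) := by
  have hv0 := hpos.r0_pos.trans_le hv
  have := hpos.a_pos
  have := hpos.D2_pos
  have := hpos.L2m_pos
  have := Hinf_pos hpos
  calc |𝓡 f1 f2 v - 𝓡 g1 g2 v|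
      = |2 * c.a * v * (N2 f2 v / L2 f2 v - N2 g2 v / L2 g2 v)
          + c.D2 * (K2 f2 v / (L2 f2 v * v ^ c.nu) / 𝓗 f1 f2
            - K2 g2 v / (L2 g2 v * v ^ c.nu) / 𝓗 g1 g2)| := by
        unfold E2rate; ring_nf
    _ ≤ 2 * c.a * v * |N2 f2 v / L2 f2 v - N2 g2 v / L2 g2 v|
        + c.D2 * |K2 f2 v / (L2 f2 v * v ^ c.nu) / 𝓗 f1 f2
            - K2 g2 v / (L2 g2 v * v ^ c.nu) / 𝓗 g1 g2| := by
        refine (abs_add_le _ _).trans (le_of_eq ?_)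
        rw [abs_mul (2 * c.a * v), abs_mul c.D2, abs_of_pos (by positivity : 0 < 2 * c.a * v),
          abs_of_pos hpos.D2_pos]
    _ ≤ 2 * c.a * v * (c.Nt2 * δ / (c.L2m * v ^ c.mu)
          + c.N2M * v ^ (-c.mu) * (c.Lt2 * δ) / (c.L2m * v ^ c.mu) ^ 2)
        + c.D2 * ((c.Kt2 * v ^ (-c.mu) * δ / (c.L2m * v ^ (c.mu + c.nu))
          + c.K2M * v ^ (-c.mu) * (c.Lt2 * δ * v ^ c.nu) / (c.L2m * v ^ (c.mu + c.nu)) ^ 2)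
            / Hinf c s0 r0
          + c.K2M * v ^ (-c.mu) / (c.L2m * v ^ (c.mu + c.nu)) * (Htil c s0 r0 * δ)
            / Hinf c s0 r0 ^ 2) := by
        gcongr
        · exact abs_N2_div_L2_sub_le hpos hA hf2 hg2 hv
        · exact abs_K2_div_L2_mul_rpow_div_Hf_sub_le hpos hA hf1 hf2 hg1 hg2 hv
    _ = _ := by
        rw [show -(c.mu - 1) = 1 + -c.mu by ring,
          show -(3 * c.mu - 1) = 1 + -c.mu + -c.mu + -c.mu by ring,
          show -(2 * c.mu + c.nu) = -c.mu + -c.mu + -c.nu by ring,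
          show -(3 * c.mu + c.nu) = -c.mu + -c.mu + -c.mu + -c.nu by ring]
        simp only [Real.rpow_add hv0, Real.rpow_one, Real.rpow_neg hv0.le]
        field_simp
        ring

lemma intervalIntegrable_E2rate (hpos : PosC c s0 r0) (hA : Assum c s0 r0 L1 N1 K1 L2 N2 K2)
    (hf2 : f2 ∈ Mset r0) {η : ℝ} (hη : r0 ≤ η) : IntervalIntegrable (𝓡 f1 f2) volume r0 η :=
  ((continuousOn_E2rate hpos hA hf2).mono Set.Icc_subset_Ici_self).intervalIntegrable_of_Icc hη

lemma integral_E2rate_le (hpos : PosC c s0 r0) (hA : Assum c s0 r0 L1 N1 K1 L2 N2 K2)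
    (hf1 : f1 ∈ C1 s0 r0) (hf2 : f2 ∈ Mset r0) {η : ℝ} (hη : r0 ≤ η) :
    ∫ v in r0..η, 𝓡 f1 f2 v
      ≤ c.a * c.N2M / (c.L2m * (c.mu - 1) * r0 ^ (2 * c.mu - 2))
        + c.D2 * c.K2M
          / (Hinf c s0 r0 * c.L2m * (2 * c.mu + c.nu - 1) * r0 ^ (2 * c.mu + c.nu - 1)) := by
  have hmu := hpos.two_lt_mu
  have hnu := hpos.one_lt_mu_add_nu
  have := hpos.a_pos
  have := hpos.D2_pos
  have := hpos.N2M_pos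
  have := hpos.K2M_pos
  have := hpos.L2m_pos
  have := Hinf_pos hpos
  have := hpos.r0_pos
  have key := integral_le_sum_rpow_neg Finset.univ
    (C := ![2 * c.a * c.N2M / c.L2m, c.D2 * c.K2M / (Hinf c s0 r0 * c.L2m)])
    (p := ![2 * c.mu - 1, 2 * c.mu + c.nu]) hpos.r0_pos hη
    (by simp [Fin.forall_fin_two]; constructor <;> linarith)
    (by simp [Fin.forall_fin_two]; constructor <;> positivity)
    (intervalIntegrable_E2rate hpos hA hf2 hη)
    fun v hv => by simpa [Fin.sum_univ_two] using E2rate_le hpos hA hf1 hf2 hv.1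
  simp only [Fin.sum_univ_two, Matrix.cons_val_zero, Matrix.cons_val_one] at key
  refine key.trans_eq ?_
  rw [show 2 * c.mu - 1 - 1 = 2 * c.mu - 2 by ring]
  have : c.mu - 1 ≠ 0 := by linarith
  field_simp

lemma E2f_le_one (hpos : PosC c s0 r0) (hA : Assum c s0 r0 L1 N1 K1 L2 N2 K2)
    (hf1 : f1 ∈ C1 s0 r0) (hf2 : f2 ∈ Mset r0) {η : ℝ} (hη : r0 ≤ η) : 𝓔 f1 f2 η ≤ 1 :=
  Real.exp_le_one_iff.2 (neg_nonpos.2 (intervalIntegral.integral_nonneg hη fun _ hv =>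
    E2rate_nonneg hpos hA hf1 hf2 hv.1))

lemma E2inf_le_E2f (hpos : PosC c s0 r0) (hA : Assum c s0 r0 L1 N1 K1 L2 N2 K2)
    (hf1 : f1 ∈ C1 s0 r0) (hf2 : f2 ∈ Mset r0) {η : ℝ} (hη : r0 ≤ η) :
    E2inf c s0 r0 ≤ 𝓔 f1 f2 η :=
  Real.exp_le_exp.2 (neg_le_neg (integral_E2rate_le hpos hA hf1 hf2 hη))

lemma abs_integral_E2rate_sub_le (hpos : PosC c s0 r0) (hA : Assum c s0 r0 L1 N1 K1 L2 N2 K2)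
    (hf1 : f1 ∈ C1 s0 r0) (hf2 : f2 ∈ Mset r0) (hg1 : g1 ∈ C1 s0 r0) (hg2 : g2 ∈ Mset r0)
    {η : ℝ} (hη : r0 ≤ η) :
    |(∫ v in r0..η, 𝓡 f1 f2 v) - ∫ v in r0..η, 𝓡 g1 g2 v| ≤ E2til c s0 r0 * δ := by
  have hmu := hpos.two_lt_mu
  have hnu := hpos.one_lt_mu_add_nu
  have := hpos.a_pos
  have := hpos.D2_pos
  have := hpos.N2M_pos
  have := hpos.K2M_pos
  have := hpos.L2m_pos
  have := hpos.Nt2_pos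
  have := hpos.Lt2_pos
  have := hpos.Kt2_pos
  have := Hinf_pos hpos
  have := hpos.r0_pos
  have := Htil_pos hpos
  have : 0 ≤ δ := pairNorm_nonneg
  rw [← intervalIntegral.integral_sub (intervalIntegrable_E2rate hpos hA hf2 hη)
    (intervalIntegrable_E2rate hpos hA hg2 hη)]
  have key := abs_integral_le_sum_rpow_neg Finset.univ
    (C := ![2 * c.a * c.Nt2 * δ / c.L2m, 2 * c.a * c.N2M * c.Lt2 * δ / c.L2m ^ 2,
      c.D2 * c.Kt2 * δ / (Hinf c s0 r0 * c.L2m)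
        + c.D2 * c.K2M * (Htil c s0 r0 * δ) / (Hinf c s0 r0 ^ 2 * c.L2m),
      c.D2 * c.K2M * c.Lt2 * δ / (Hinf c s0 r0 * c.L2m ^ 2)])
    (p := ![c.mu - 1, 3 * c.mu - 1, 2 * c.mu + c.nu, 3 * c.mu + c.nu]) hpos.r0_pos hη
    (by simp [Fin.forall_fin_succ]; refine ⟨?_, ?_, ?_, ?_⟩ <;> linarith)
    (by simp [Fin.forall_fin_succ]; refine ⟨?_, ?_, ?_, ?_⟩ <;> positivity)
    ((intervalIntegrable_E2rate hpos hA hf2 hη).sub (intervalIntegrable_E2rate hpos hA hg2 hη))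
    fun v hv => by simpa [Fin.sum_univ_four] using abs_E2rate_sub_le hpos hA hf1 hf2 hg1 hg2 hv.1
  simp only [Fin.sum_univ_four, Matrix.cons_val] at key
  refine key.trans_eq ?_
  rw [show c.mu - 1 - 1 = c.mu - 2 by ring, show 3 * c.mu - 1 - 1 = 3 * c.mu - 2 by ring, E2til]
  have : c.mu - 2 ≠ 0 := by linarith
  have : 3 * c.mu - 2 ≠ 0 := by linarith
  have : 2 * c.mu + c.nu - 1 ≠ 0 := by linarith
  have : 3 * c.mu + c.nu - 1 ≠ 0 := by linarith
  field_simp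
  ring

lemma abs_E2f_sub_le (hpos : PosC c s0 r0) (hA : Assum c s0 r0 L1 N1 K1 L2 N2 K2)
    (hf1 : f1 ∈ C1 s0 r0) (hf2 : f2 ∈ Mset r0) (hg1 : g1 ∈ C1 s0 r0) (hg2 : g2 ∈ Mset r0)
    {η : ℝ} (hη : r0 ≤ η) : |𝓔 f1 f2 η - 𝓔 g1 g2 η| ≤ E2til c s0 r0 * δ :=
  (abs_exp_neg_sub_exp_neg_le
    (intervalIntegral.integral_nonneg hη fun _ hv => E2rate_nonneg hpos hA hf1 hf2 hv.1)
    (intervalIntegral.integral_nonneg hη fun _ hv => E2rate_nonneg hpos hA hg1 hg2 hv.1)).trans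
    (abs_integral_E2rate_sub_le hpos hA hf1 hf2 hg1 hg2 hη)

lemma continuousOn_E2f (hpos : PosC c s0 r0) (hA : Assum c s0 r0 L1 N1 K1 L2 N2 K2)
    (hf2 : f2 ∈ Mset r0) {η : ℝ} (hη : r0 ≤ η) : ContinuousOn (𝓔 f1 f2) (Set.Icc r0 η) := by
  have hint : IntegrableOn (𝓡 f1 f2) (Set.uIcc r0 η) := by
    rw [Set.uIcc_of_le hη]
    exact ((continuousOn_E2rate hpos hA hf2).mono Set.Icc_subset_Ici_self).integrableOn_Icc
  have := (intervalIntegral.continuousOn_primitive_interval hint).neg.rexp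
  rw [Set.uIcc_of_le hη] at this
  exact this

local notation "Φ₂" => Phi2f c s0 r0 L1 N1 K1 L2 N2 K2

lemma intervalIntegrable_Phi2_integrand (hpos : PosC c s0 r0)
    (hA : Assum c s0 r0 L1 N1 K1 L2 N2 K2) (hf2 : f2 ∈ Mset r0) {η : ℝ} (hη : r0 ≤ η) :
    IntervalIntegrable (fun v => 𝓔 f1 f2 v / (L2 f2 v * v ^ c.nu)) volume r0 η := by
  have hv0 : ∀ v ∈ Set.Icc r0 η, 0 < v := fun v hv => hpos.r0_pos.trans_le hv.1
  refine ContinuousOn.intervalIntegrable_of_Icc hη ((continuousOn_E2f hpos hA hf2 hη).div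
    (((hA.continuousOn_L2 hf2).mono Set.Icc_subset_Ici_self).mul
      (continuousOn_id.rpow_const fun v hv => Or.inl (hv0 v hv).ne')) fun v hv => ?_)
  exact (mul_pos (L2_pos hpos hA hf2 hv.1) (Real.rpow_pos_of_pos (hv0 v hv) _)).ne'

lemma Phi2f_le (hpos : PosC c s0 r0) (hA : Assum c s0 r0 L1 N1 K1 L2 N2 K2)
    (hf1 : f1 ∈ C1 s0 r0) (hf2 : f2 ∈ Mset r0) {η : ℝ} (hη : r0 ≤ η) :
    Φ₂ f1 f2 η ≤ 1 / (c.L2m * (c.mu + c.nu - 1) * r0 ^ (c.mu + c.nu - 1)) := by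
  have := hpos.L2m_pos
  refine (integral_le_const_mul_rpow_neg hpos.r0_pos hη hpos.one_lt_mu_add_nu
    (by positivity : (0 : ℝ) ≤ 1 / c.L2m) (intervalIntegrable_Phi2_integrand hpos hA hf2 hη)
    fun v hv => ?_).trans_eq (by field_simp)
  have hv0 := hpos.r0_pos.trans_le hv.1
  calc 𝓔 f1 f2 v / (L2 f2 v * v ^ c.nu) ≤ 1 / (c.L2m * v ^ (c.mu + c.nu)) :=
        div_le_div₀ zero_le_one (E2f_le_one hpos hA hf1 hf2 hv.1) (by positivity)
          (L2m_mul_rpow_le hpos hA hf2 hv.1)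
    _ = 1 / c.L2m * v ^ (-(c.mu + c.nu)) := by rw [Real.rpow_neg hv0.le]; field_simp

lemma le_Phi2f (hpos : PosC c s0 r0) (hA : Assum c s0 r0 L1 N1 K1 L2 N2 K2)
    (hf1 : f1 ∈ C1 s0 r0) (hf2 : f2 ∈ Mset r0) {η : ℝ} (hη : r0 ≤ η) :
    E2inf c s0 r0 / (c.L2M * (c.mu + c.nu - 1))
        * (r0 ^ (-(c.mu + c.nu - 1)) - η ^ (-(c.mu + c.nu - 1)))
      ≤ Φ₂ f1 f2 η := by
  have := hpos.L2M_pos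
  have hq : c.mu + c.nu - 1 ≠ 0 := by linarith [hpos.one_lt_mu_add_nu]
  have hlow : ∀ v ∈ Set.Icc r0 η,
      E2inf c s0 r0 / c.L2M * v ^ (-(c.mu + c.nu)) ≤ 𝓔 f1 f2 v / (L2 f2 v * v ^ c.nu) := by
    intro v hv
    have hv0 := hpos.r0_pos.trans_le hv.1
    calc E2inf c s0 r0 / c.L2M * v ^ (-(c.mu + c.nu))
        = E2inf c s0 r0 / (c.L2M * v ^ (c.mu + c.nu)) := by
          rw [Real.rpow_neg hv0.le]; field_simp
      _ ≤ 𝓔 f1 f2 v / (L2 f2 v * v ^ c.nu) :=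
          div_le_div₀ (Real.exp_pos _).le (E2inf_le_E2f hpos hA hf1 hf2 hv.1)
            (mul_pos (L2_pos hpos hA hf2 hv.1) (Real.rpow_pos_of_pos hv0 _))
            (L2_mul_rpow_le hpos hA hf2 hv.1)
  calc E2inf c s0 r0 / (c.L2M * (c.mu + c.nu - 1))
        * (r0 ^ (-(c.mu + c.nu - 1)) - η ^ (-(c.mu + c.nu - 1)))
      = ∫ v in r0..η, E2inf c s0 r0 / c.L2M * v ^ (-(c.mu + c.nu)) := by
        rw [intervalIntegral.integral_const_mul,
          integral_rpow_neg_of_one_lt hpos.r0_pos hη hpos.one_lt_mu_add_nu,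
          show 1 - (c.mu + c.nu) = -(c.mu + c.nu - 1) by ring]
        field_simp
    _ ≤ Φ₂ f1 f2 η := intervalIntegral.integral_mono_on hη
        ((intervalIntegrable_rpow_of_pos hpos.r0_pos hη).const_mul _)
        (intervalIntegrable_Phi2_integrand hpos hA hf2 hη) hlow

lemma abs_Phi2_integrand_sub_le (hpos : PosC c s0 r0) (hA : Assum c s0 r0 L1 N1 K1 L2 N2 K2)
    (hf1 : f1 ∈ C1 s0 r0) (hf2 : f2 ∈ Mset r0) (hg1 : g1 ∈ C1 s0 r0) (hg2 : g2 ∈ Mset r0)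
    (hv : v ∈ Set.Ici r0) :
    |𝓔 f1 f2 v / (L2 f2 v * v ^ c.nu) - 𝓔 g1 g2 v / (L2 g2 v * v ^ c.nu)|
      ≤ E2til c s0 r0 * δ / c.L2m * v ^ (-(c.mu + c.nu))
        + c.Lt2 * δ / c.L2m ^ 2 * v ^ (-(2 * c.mu + c.nu)) := by
  have hv0 := hpos.r0_pos.trans_le hv
  have := hpos.L2m_pos
  refine (abs_div_sub_div_le (by positivity) (L2m_mul_rpow_le hpos hA hf2 hv)
    (L2m_mul_rpow_le hpos hA hg2 hv)
    ((abs_of_pos (Real.exp_pos _)).trans_le (E2f_le_one hpos hA hg1 hg2 hv))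
    (abs_E2f_sub_le hpos hA hf1 hf2 hg1 hg2 hv)
    (abs_L2_mul_rpow_sub_le (f1 := f1) (g1 := g1) hpos hA hf2 hg2 hv)).trans_eq ?_
  rw [show -(c.mu + c.nu) = -c.mu + -c.nu by ring,
    show -(2 * c.mu + c.nu) = -c.mu + -c.mu + -c.nu by ring]
  simp only [Real.rpow_add hv0, Real.rpow_neg hv0.le]
  field_simp

lemma abs_Phi2f_sub_le (hpos : PosC c s0 r0) (hA : Assum c s0 r0 L1 N1 K1 L2 N2 K2)
    (hf1 : f1 ∈ C1 s0 r0) (hf2 : f2 ∈ Mset r0) (hg1 : g1 ∈ C1 s0 r0) (hg2 : g2 ∈ Mset r0)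
    {η : ℝ} (hη : r0 ≤ η) : |Φ₂ f1 f2 η - Φ₂ g1 g2 η| ≤ Phi2til c s0 r0 * δ := by
  have hnu := hpos.one_lt_mu_add_nu
  have hmu := hpos.two_lt_mu
  have := hpos.L2m_pos
  have := hpos.Lt2_pos
  have : 0 ≤ δ := pairNorm_nonneg
  have hE2til : 0 ≤ E2til c s0 r0 * δ :=
    (abs_nonneg _).trans (abs_E2f_sub_le hpos hA hf1 hf2 hg1 hg2 le_rfl)
  rw [Phi2f, Phi2f, ← intervalIntegral.integral_sub
    (intervalIntegrable_Phi2_integrand hpos hA hf2 hη)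
    (intervalIntegrable_Phi2_integrand hpos hA hg2 hη)]
  have key := abs_integral_le_sum_rpow_neg Finset.univ
    (C := ![E2til c s0 r0 * δ / c.L2m, c.Lt2 * δ / c.L2m ^ 2])
    (p := ![c.mu + c.nu, 2 * c.mu + c.nu]) hpos.r0_pos hη
    (by simp [Fin.forall_fin_two]; constructor <;> linarith)
    (by simp [Fin.forall_fin_two]; constructor <;> positivity)
    ((intervalIntegrable_Phi2_integrand hpos hA hf2 hη).sub
      (intervalIntegrable_Phi2_integrand hpos hA hg2 hη))
    fun v hv => by
      simpa [Fin.sum_univ_two] using abs_Phi2_integrand_sub_le hpos hA hf1 hf2 hg1 hg2 hv.1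
  simp only [Fin.sum_univ_two, Matrix.cons_val] at key
  refine key.trans_eq ?_
  have : c.mu + c.nu - 1 ≠ 0 := by linarith
  have : 2 * c.mu + c.nu - 1 ≠ 0 := by linarith
  rw [Phi2til]
  field_simp

end Setting

theorem stmt12 (c : Cst) (s0 r0 : ℝ) (L1 N1 K1 L2 N2 K2 : (ℝ → ℝ) → ℝ → ℝ)
    (hpos : PosC c s0 r0) (hA : Assum c s0 r0 L1 N1 K1 L2 N2 K2)
    (f1 f2 : ℝ → ℝ) (hf1 : f1 ∈ C1 s0 r0) (hf2 : f2 ∈ Mset r0)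
    (g1 g2 : ℝ → ℝ) (hg1 : g1 ∈ C1 s0 r0) (hg2 : g2 ∈ Mset r0) :
    ∀ η ∈ Set.Ici r0,
      (E2inf c s0 r0 / (c.L2M * (c.mu + c.nu - 1))
            * (r0 ^ (-(c.mu + c.nu - 1)) - η ^ (-(c.mu + c.nu - 1)))
          ≤ Phi2f c s0 r0 L1 N1 K1 L2 N2 K2 f1 f2 η) ∧
        Phi2f c s0 r0 L1 N1 K1 L2 N2 K2 f1 f2 η ≤ 1 / (c.L2m * (c.mu + c.nu - 1) * r0 ^ (c.mu + c.nu - 1)) ∧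
        |Phi2f c s0 r0 L1 N1 K1 L2 N2 K2 f1 f2 η - Phi2f c s0 r0 L1 N1 K1 L2 N2 K2 g1 g2 η| ≤ Phi2til c s0 r0 * pairNorm s0 r0 f1 f2 g1 g2 := by
  intro η hη
  exact ⟨le_Phi2f hpos hA hf1 hf2 hη, Phi2f_le hpos hA hf1 hf2 hη,
    abs_Phi2f_sub_le hpos hA hf1 hf2 hg1 hg2 hη⟩
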